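/- arXiv:1608.08597 — 2 statements merged into one kernel-verified Lean document; each statement's English description precedes it below -/
import Mathlib

section
/- (Theorem 1(i).) Let Q, E ∈ ℝ^{n×n} and let x be a trajectory of the switched system. Then the cost function value J = ∫_0^{τ_{N+1}} x(t)ᵀ Q x(t) dt + x(τ_{N+1})ᵀ E x(τ_{N+1}) is the quadratic function of the initial state J = x_0ᵀ S_0 x_0. -/
open Matrix

/-- Matrix exponential of a real square matrix. -/
noncomputable def expM {n : ℕ} (A : Matrix (Fin n) (Fin n) ℝ) : Matrix (Fin n) (Fin n) ℝ :=
  NormedSpace.exp A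

/-- Switching times: `tau δ i = ∑_{j<i} δ j`. -/
noncomputable def tau (δ : ℕ → ℝ) (i : ℕ) : ℝ := ∑ j ∈ Finset.range i, δ j

/-- State transition matrix `Φ(l, i) = exp(δ_{l-1} A_{l-1}) ⋯ exp(δ_i A_i)`
(ordered product, larger indices on the left; `Φ(i,i) = 1`). -/
noncomputable def Phi {n : ℕ} (A : ℕ → Matrix (Fin n) (Fin n) ℝ) (δ : ℕ → ℝ)
    (l i : ℕ) : Matrix (Fin n) (Fin n) ℝ :=
  (((List.range (l - i)).reverse).map (fun p => expM (δ (i + p) • A (i + p)))).prod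

/-- `M_q = ∫_0^{δ_q} exp(η A_q)ᵀ Q exp(η A_q) dη`, taken entrywise. -/
noncomputable def Mmat {n : ℕ} (A : ℕ → Matrix (Fin n) (Fin n) ℝ) (δ : ℕ → ℝ)
    (Q : Matrix (Fin n) (Fin n) ℝ) (q : ℕ) : Matrix (Fin n) (Fin n) ℝ :=
  Matrix.of fun k l => ∫ η in (0:ℝ)..δ q, ((expM (η • A q))ᵀ * Q * expM (η • A q)) k l

/-- `P_a = ∑_{q=a}^N Φ(q,a)ᵀ M_q Φ(q,a)`. -/
noncomputable def Pmat {n : ℕ} (N : ℕ) (A : ℕ → Matrix (Fin n) (Fin n) ℝ) (δ : ℕ → ℝ)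
    (Q : Matrix (Fin n) (Fin n) ℝ) (a : ℕ) : Matrix (Fin n) (Fin n) ℝ :=
  ∑ q ∈ Finset.Icc a N, (Phi A δ q a)ᵀ * Mmat A δ Q q * Phi A δ q a

/-- `F_a = Φ(N+1,a)ᵀ E Φ(N+1,a)`. -/
noncomputable def Fmat {n : ℕ} (N : ℕ) (A : ℕ → Matrix (Fin n) (Fin n) ℝ) (δ : ℕ → ℝ)
    (E : Matrix (Fin n) (Fin n) ℝ) (a : ℕ) : Matrix (Fin n) (Fin n) ℝ :=
  (Phi A δ (N + 1) a)ᵀ * E * Phi A δ (N + 1) a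

/-- `S_a = P_a + F_a`. -/
noncomputable def Smat {n : ℕ} (N : ℕ) (A : ℕ → Matrix (Fin n) (Fin n) ℝ) (δ : ℕ → ℝ)
    (Q E : Matrix (Fin n) (Fin n) ℝ) (a : ℕ) : Matrix (Fin n) (Fin n) ℝ :=
  Pmat N A δ Q a + Fmat N A δ E a

/-- A trajectory of the switched system: continuous on `[0, τ_{N+1}]`, starting at `x0`,
satisfying `x' = A_i x` on each open interval `(τ_i, τ_{i+1})`. -/
def IsTrajectory {n : ℕ} (N : ℕ) (A : ℕ → Matrix (Fin n) (Fin n) ℝ) (δ : ℕ → ℝ)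
    (x0 : Fin n → ℝ) (x : ℝ → Fin n → ℝ) : Prop :=
  ContinuousOn x (Set.Icc 0 (tau δ (N + 1))) ∧ x 0 = x0 ∧
    ∀ i ≤ N, ∀ t ∈ Set.Ioo (tau δ i) (tau δ (i + 1)),
      HasDerivAt x ((A i).mulVec (x t)) t

/-!
On each switching interval `[τ_i, τ_{i+1}]` the trajectory solves `x' = A_i x`, so uniqueness for
linear ODEs gives `x(t) = exp((t - τ_i) A_i) x(τ_i)`; in particular `x(τ_i) = Φ(i,0) x_0`.
Splitting the cost integral at the switching times and substituting `t = τ_i + η` turns its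
`i`-th piece into `x(τ_i)ᵀ M_i x(τ_i) = x_0ᵀ Φ(i,0)ᵀ M_i Φ(i,0) x_0`, and the terminal cost is
`x_0ᵀ F_0 x_0`.
-/

section MatrixExp

open scoped Matrix.Norms.Operator

variable {n : ℕ}

lemma continuous_expM : Continuous (expM (n := n)) :=
  NormedSpace.exp_continuous

lemma expM_add_smul (A : Matrix (Fin n) (Fin n) ℝ) (s t : ℝ) :
    expM ((s + t) • A) = expM (s • A) * expM (t • A) := by
  rw [add_smul]
  exact Matrix.exp_add_of_commute _ _ (((Commute.refl A).smul_left s).smul_right t)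

lemma hasDerivAt_expM_sub_smul_mulVec (A : Matrix (Fin n) (Fin n) ℝ) (v : Fin n → ℝ)
    (c t : ℝ) :
    HasDerivAt (fun s : ℝ => expM ((s - c) • A) *ᵥ v) (A *ᵥ (expM ((t - c) • A) *ᵥ v)) t := by
  have hexp : HasDerivAt (fun s : ℝ => expM ((s - c) • A)) (A * expM ((t - c) • A)) t :=
    (hasDerivAt_exp_smul_const' A (t - c)).comp_sub_const t c
  rw [mulVec_mulVec]
  exact (LinearMap.toContinuousLinearMap ((mulVecBilin ℝ ℝ).flip v)).hasFDerivAt.comp_hasDerivAt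
    t hexp

end MatrixExp

lemma eqOn_expM_mulVec_of_hasDerivAt {n : ℕ} {A : Matrix (Fin n) (Fin n) ℝ}
    {x : ℝ → Fin n → ℝ} {a b : ℝ} (hcont : ContinuousOn x (Set.Icc a b))
    (hderiv : ∀ t ∈ Set.Ioo a b, HasDerivAt x (A *ᵥ x t) t) :
    Set.EqOn x (fun t => expM ((t - a) • A) *ᵥ x a) (Set.Icc a b) := by
  rcases lt_or_ge a b with hab | hba
  · -- `x` is only known to be differentiable on the open interval, so uniqueness is applied
    -- from an interior time `s` and transported to `a` by the group law of `expM`.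
    obtain ⟨s, hs⟩ := Set.nonempty_Ioo.2 hab
    have hsol : Set.EqOn x (fun t => expM ((t - s) • A) *ᵥ x s) (Set.Icc a b) :=
      ODE_solution_unique_of_mem_Icc (v := fun _ y => A *ᵥ y) (s := fun _ => Set.univ)
        (fun _ _ => (LinearMap.toContinuousLinearMap A.mulVecLin).lipschitz.lipschitzOnWith)
        hs hcont hderiv (fun _ _ => trivial)
        (fun t _ => (hasDerivAt_expM_sub_smul_mulVec A (x s) s t).continuousAt.continuousWithinAt)
        (fun t _ => hasDerivAt_expM_sub_smul_mulVec A (x s) s t) (fun _ _ => trivial)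
        (by simp [expM])
    intro t ht
    rw [hsol ht, hsol (Set.left_mem_Icc.2 hab.le)]
    dsimp only
    rw [mulVec_mulVec, ← expM_add_smul, sub_add_sub_cancel]
  · intro t ht
    obtain rfl : t = a := le_antisymm (ht.2.trans hba) ht.1
    simp [expM]

lemma tau_zero (δ : ℕ → ℝ) : tau δ 0 = 0 := Finset.sum_range_zero δ

lemma tau_succ (δ : ℕ → ℝ) (i : ℕ) : tau δ (i + 1) = tau δ i + δ i := Finset.sum_range_succ δ i

lemma tau_le_tau {δ : ℕ → ℝ} {i j : ℕ} (hδ : ∀ q < j, 0 ≤ δ q) (hij : i ≤ j) :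
    tau δ i ≤ tau δ j :=
  Finset.sum_le_sum_of_subset_of_nonneg (Finset.range_mono hij)
    fun q hq _ => hδ q (Finset.mem_range.1 hq)

lemma Icc_tau_subset_Icc_zero {δ : ℕ → ℝ} {N i : ℕ} (hδ : ∀ q ≤ N, 0 ≤ δ q) (hi : i ≤ N) :
    Set.Icc (tau δ i) (tau δ (i + 1)) ⊆ Set.Icc 0 (tau δ (N + 1)) := by
  have hδ' : ∀ q < N + 1, 0 ≤ δ q := fun q hq => hδ q (Nat.le_of_lt_succ hq)
  refine Set.Icc_subset_Icc ?_ (tau_le_tau hδ' (by omega))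
  simpa only [tau_zero] using tau_le_tau (fun q hq => hδ q (by omega)) (Nat.zero_le i)

lemma Phi_succ_zero {n : ℕ} (A : ℕ → Matrix (Fin n) (Fin n) ℝ) (δ : ℕ → ℝ) (l : ℕ) :
    Phi A δ (l + 1) 0 = expM (δ l • A l) * Phi A δ l 0 := by
  simp [Phi, List.range_succ]

lemma dotProduct_mulVec_conj {m n : Type*} [Fintype m] [Fintype n]
    (B : Matrix m n ℝ) (M : Matrix m m ℝ) (v : n → ℝ) :
    B *ᵥ v ⬝ᵥ M *ᵥ (B *ᵥ v) = v ⬝ᵥ (Bᵀ * M * B) *ᵥ v := by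
  rw [← mulVec_mulVec, ← mulVec_mulVec, dotProduct_mulVec v Bᵀ, vecMul_transpose]

lemma intervalIntegral_dotProduct_mulVec {m n : Type*} [Fintype m] [Fintype n]
    {G : ℝ → Matrix m n ℝ} (hG : Continuous G) (u : m → ℝ) (v : n → ℝ) (c d : ℝ) :
    ∫ η in c..d, u ⬝ᵥ G η *ᵥ v = u ⬝ᵥ (Matrix.of fun k l => ∫ η in c..d, G η k l) *ᵥ v := by
  have hcont : ∀ k l, Continuous fun η => u k * (G η k l * v l) :=
    fun k l => continuous_const.mul ((hG.matrix_elem k l).mul continuous_const)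
  simp only [dotProduct, mulVec, of_apply, Finset.mul_sum]
  rw [intervalIntegral.integral_finsetSum (f := fun k η => ∑ l, u k * (G η k l * v l))
    fun k _ => (continuous_finsetSum _ fun l _ => hcont k l).intervalIntegrable _ _]
  refine Finset.sum_congr rfl fun k _ => ?_
  rw [intervalIntegral.integral_finsetSum (f := fun l η => u k * (G η k l * v l))
    fun l _ => (hcont k l).intervalIntegrable _ _]
  simp only [intervalIntegral.integral_const_mul, intervalIntegral.integral_mul_const]

namespace IsTrajectory

variable {n N : ℕ} {A : ℕ → Matrix (Fin n) (Fin n) ℝ} {δ : ℕ → ℝ} {x0 : Fin n → ℝ}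
  {x : ℝ → Fin n → ℝ}

lemma eqOn_Icc_tau (hδ : ∀ q ≤ N, 0 ≤ δ q) (hx : IsTrajectory N A δ x0 x) {i : ℕ}
    (hi : i ≤ N) :
    Set.EqOn x (fun t => expM ((t - tau δ i) • A i) *ᵥ x (tau δ i))
      (Set.Icc (tau δ i) (tau δ (i + 1))) :=
  eqOn_expM_mulVec_of_hasDerivAt (hx.1.mono (Icc_tau_subset_Icc_zero hδ hi)) (hx.2.2 i hi)

lemma apply_tau (hδ : ∀ q ≤ N, 0 ≤ δ q) (hx : IsTrajectory N A δ x0 x) {i : ℕ}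
    (hi : i ≤ N + 1) : x (tau δ i) = Phi A δ i 0 *ᵥ x0 := by
  induction i with
  | zero => simp [tau_zero, Phi, hx.2.1]
  | succ i ih =>
    have hδi : 0 ≤ δ i := hδ i (by omega)
    have hend : tau δ (i + 1) ∈ Set.Icc (tau δ i) (tau δ (i + 1)) :=
      ⟨by rw [tau_succ]; linarith, le_rfl⟩
    rw [hx.eqOn_Icc_tau hδ (by omega) hend, ih (by omega), Phi_succ_zero, ← mulVec_mulVec]
    dsimp only
    rw [tau_succ, add_sub_cancel_left]

lemma integral_tau_tau_succ (hδ : ∀ q ≤ N, 0 ≤ δ q) (hx : IsTrajectory N A δ x0 x)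
    (Q : Matrix (Fin n) (Fin n) ℝ) {i : ℕ} (hi : i ≤ N) :
    ∫ t in tau δ i..tau δ (i + 1), x t ⬝ᵥ Q *ᵥ x t
      = x (tau δ i) ⬝ᵥ Mmat A δ Q i *ᵥ x (tau δ i) := by
  have hexp : Continuous fun η : ℝ => expM (η • A i) :=
    continuous_expM.comp (continuous_id.smul continuous_const)
  have hsol : Set.EqOn (fun η => x (tau δ i + η) ⬝ᵥ Q *ᵥ x (tau δ i + η))
      (fun η => x (tau δ i) ⬝ᵥ ((expM (η • A i))ᵀ * Q * expM (η • A i)) *ᵥ x (tau δ i))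
      (Set.uIcc 0 (δ i)) := by
    intro η hη
    rw [Set.uIcc_of_le (hδ i hi)] at hη
    have hmem : tau δ i + η ∈ Set.Icc (tau δ i) (tau δ (i + 1)) := by
      rw [tau_succ]; constructor <;> linarith [hη.1, hη.2]
    simp only [hx.eqOn_Icc_tau hδ hi hmem, add_sub_cancel_left, dotProduct_mulVec_conj]
  have hshift := intervalIntegral.integral_comp_add_left (fun t => x t ⬝ᵥ Q *ᵥ x t) (tau δ i)
    (a := 0) (b := δ i)
  rw [add_zero, ← tau_succ] at hshift
  have hG : Continuous fun η : ℝ => (expM (η • A i))ᵀ * Q * expM (η • A i) :=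
    (hexp.matrix_transpose.matrix_mul continuous_const).matrix_mul hexp
  rw [← hshift, intervalIntegral.integral_congr hsol, intervalIntegral_dotProduct_mulVec hG]
  rfl

end IsTrajectory

/-- Theorem 1(i): the cost `J = ∫_0^{τ_{N+1}} xᵀQx dt + x(τ_{N+1})ᵀ E x(τ_{N+1})`
equals the quadratic function `x_0ᵀ S_0 x_0` of the initial state. -/
theorem stmt3 {n N : ℕ} (A : ℕ → Matrix (Fin n) (Fin n) ℝ) (δ : ℕ → ℝ)
    (hδ : ∀ q ≤ N, 0 ≤ δ q) (Q E : Matrix (Fin n) (Fin n) ℝ)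
    (x0 : Fin n → ℝ) (x : ℝ → Fin n → ℝ) (hx : IsTrajectory N A δ x0 x) :
    (∫ t in (0:ℝ)..tau δ (N + 1), x t ⬝ᵥ Q.mulVec (x t)) +
        x (tau δ (N + 1)) ⬝ᵥ E.mulVec (x (tau δ (N + 1))) =
      x0 ⬝ᵥ (Smat N A δ Q E 0).mulVec x0 := by
  have hcost : ContinuousOn (fun t => x t ⬝ᵥ Q *ᵥ x t) (Set.Icc 0 (tau δ (N + 1))) :=
    (continuous_id.dotProduct (continuous_const.matrix_mulVec continuous_id)).comp_continuousOn
      hx.1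
  have hint : ∀ k < N + 1, IntervalIntegrable (fun t => x t ⬝ᵥ Q *ᵥ x t)
      MeasureTheory.volume (tau δ k) (tau δ (k + 1)) := fun k hk => by
    refine (hcost.mono ?_).intervalIntegrable
    rw [Set.uIcc_of_le (tau_le_tau (fun q hq => hδ q (by omega)) k.le_succ)]
    exact Icc_tau_subset_Icc_zero hδ (by omega)
  have hsplit := intervalIntegral.sum_integral_adjacent_intervals hint
  rw [tau_zero] at hsplit
  have hpiece : ∀ k ∈ Finset.range (N + 1),
      ∫ t in tau δ k..tau δ (k + 1), x t ⬝ᵥ Q *ᵥ x t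
        = x0 ⬝ᵥ ((Phi A δ k 0)ᵀ * Mmat A δ Q k * Phi A δ k 0) *ᵥ x0 := fun k hk => by
    have hk : k ≤ N := Nat.le_of_lt_succ (Finset.mem_range.1 hk)
    rw [hx.integral_tau_tau_succ hδ Q hk, hx.apply_tau hδ (by omega), dotProduct_mulVec_conj]
  rw [← hsplit, Finset.sum_congr rfl hpiece, hx.apply_tau hδ le_rfl, dotProduct_mulVec_conj,
    Smat, Pmat, Fmat, add_mulVec, dotProduct_add, sum_mulVec, dotProduct_sum,
    Nat.range_succ_eq_Icc_zero]
end

section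
/- Fix Q ∈ ℝ^{n×n} and indices 0 ≤ a ≤ i ≤ N, and regard P_a as a function of δ ∈ ℝ^{N+1} through the defining formulas. Then the partial derivative of P_a with respect to δ_i exists at every δ with nonnegative entries and equals Φ(i+1, a)ᵀ (Q + A_iᵀ P_{i+1} + P_{i+1} A_i) Φ(i+1, a), where Φ(i+1, a) and P_{i+1} are evaluated at δ. -/
open Matrix

/-! Only the block `q = i` of `P_a` sees `δ_i` through `M_i`; every later block sees it through
the factor `exp(δ_i A_i)` of `Φ(q, a) = Φ(q, i+1) exp(δ_i A_i) Φ(i, a)`. Grouping the later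
blocks gives `P_a = C + Φ(i,a)ᵀ (M_i + exp(δ_i A_i)ᵀ P_{i+1} exp(δ_i A_i)) Φ(i,a)` with `C`,
`Φ(i, a)` and `P_{i+1}` independent of `δ_i`, so the claim reduces to the fundamental theorem of
calculus for `M_i` and the derivative `Bᵀ P + P B` of the congruence `s ↦ exp(sB)ᵀ P exp(sB)`. -/

theorem Matrix.sum_transpose_mul_mul_conj {α ι R : Type*} [Fintype ι] [CommSemiring R]
    (s : Finset α) (B M : α → Matrix ι ι R) (X : Matrix ι ι R) :
    ∑ q ∈ s, (B q * X)ᵀ * M q * (B q * X) = Xᵀ * (∑ q ∈ s, (B q)ᵀ * M q * B q) * X := by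
  simp only [transpose_mul, Finset.mul_sum, Finset.sum_mul, Matrix.mul_assoc]

section Algebra

variable {n : ℕ} (A : ℕ → Matrix (Fin n) (Fin n) ℝ)

theorem Phi_congr {δ δ' : ℕ → ℝ} {l i : ℕ} (h : ∀ p, i ≤ p → p < l → δ p = δ' p) :
    Phi A δ l i = Phi A δ' l i := by
  unfold Phi
  congr 1
  refine List.map_congr_left fun p hp => ?_
  rw [List.mem_reverse, List.mem_range] at hp
  rw [h (i + p) (Nat.le_add_right _ _) (by omega)]

variable (δ : ℕ → ℝ)

@[simp]
theorem Phi_self (i : ℕ) : Phi A δ i i = 1 := by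
  simp [Phi]

theorem Phi_succ_self (i : ℕ) : Phi A δ (i + 1) i = expM (δ i • A i) := by
  simp [Phi, show i + 1 - i = 1 by omega]

theorem Phi_mul {a m q : ℕ} (ham : a ≤ m) (hmq : m ≤ q) :
    Phi A δ q m * Phi A δ m a = Phi A δ q a := by
  unfold Phi
  rw [show q - a = (m - a) + (q - m) by omega, List.range_add, List.reverse_append,
    List.map_append, List.prod_append, ← List.map_reverse, List.map_map]
  congr 2
  refine List.map_congr_left fun p _ => ?_
  simp only [Function.comp_apply, show a + (m - a + p) = m + p by omega]

variable {δ}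

theorem Mmat_congr {δ' : ℕ → ℝ} (Q : Matrix (Fin n) (Fin n) ℝ) {q : ℕ} (h : δ q = δ' q) :
    Mmat A δ Q q = Mmat A δ' Q q := by
  simp only [Mmat, h]

theorem Pmat_congr {δ' : ℕ → ℝ} (N : ℕ) (Q : Matrix (Fin n) (Fin n) ℝ) {a : ℕ}
    (h : ∀ p, a ≤ p → δ p = δ' p) : Pmat N A δ Q a = Pmat N A δ' Q a := by
  refine Finset.sum_congr rfl fun q hq => ?_
  rw [Finset.mem_Icc] at hq
  rw [Phi_congr A fun p hp _ => h p hp, Mmat_congr A Q (h q hq.1)]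

variable (δ) (N : ℕ) (Q : Matrix (Fin n) (Fin n) ℝ)

theorem Pmat_eq_sum_Ico_add {a i : ℕ} (hai : a ≤ i) (hiN : i ≤ N + 1) :
    Pmat N A δ Q a = ∑ q ∈ Finset.Ico a i, (Phi A δ q a)ᵀ * Mmat A δ Q q * Phi A δ q a +
      (Phi A δ i a)ᵀ * Pmat N A δ Q i * Phi A δ i a := by
  have htail : ∑ q ∈ Finset.Ico i (N + 1), (Phi A δ q a)ᵀ * Mmat A δ Q q * Phi A δ q a =
      (Phi A δ i a)ᵀ * Pmat N A δ Q i * Phi A δ i a := by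
    rw [Pmat, ← Matrix.sum_transpose_mul_mul_conj, Finset.Ico_add_one_right_eq_Icc]
    refine Finset.sum_congr rfl fun q hq => ?_
    rw [Phi_mul A δ hai (Finset.mem_Icc.1 hq).1]
  rw [← htail, Finset.sum_Ico_consecutive _ hai hiN, Pmat, Finset.Ico_add_one_right_eq_Icc]

theorem Pmat_eq_Mmat_add {i : ℕ} (hiN : i ≤ N) :
    Pmat N A δ Q i =
      Mmat A δ Q i + (expM (δ i • A i))ᵀ * Pmat N A δ Q (i + 1) * expM (δ i • A i) := by
  rw [Pmat_eq_sum_Ico_add A δ N Q (Nat.le_succ i) (by omega), Nat.Ico_succ_singleton,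
    Finset.sum_singleton, Phi_self, Phi_succ_self]
  simp

theorem Pmat_update_eq {a i : ℕ} (hai : a ≤ i) (hiN : i ≤ N) (s : ℝ) :
    Pmat N A (Function.update δ i s) Q a =
      ∑ q ∈ Finset.Ico a i, (Phi A δ q a)ᵀ * Mmat A δ Q q * Phi A δ q a +
        (Phi A δ i a)ᵀ * (Mmat A (Function.update δ i s) Q i +
          (expM (s • A i))ᵀ * Pmat N A δ Q (i + 1) * expM (s • A i)) * Phi A δ i a := by
  have hlow : ∀ p < i, Function.update δ i s p = δ p := fun p hp =>
    Function.update_of_ne hp.ne _ _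
  rw [Pmat_eq_sum_Ico_add A _ N Q hai (by omega), Pmat_eq_Mmat_add A _ N Q hiN,
    Function.update_self, Phi_congr A fun p _ hp => hlow p hp,
    Pmat_congr A N Q fun p hp => Function.update_of_ne (by omega) _ _]
  congr 1
  refine Finset.sum_congr rfl fun q hq => ?_
  have hqi := (Finset.mem_Ico.1 hq).2
  rw [Phi_congr A fun p _ hp => hlow p (hp.trans hqi), Mmat_congr A Q (hlow q hqi)]

end Algebra

section Analysis

attribute [local instance] Matrix.linftyOpNormedRing Matrix.linftyOpNormedAlgebra

variable {n : ℕ}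

theorem HasDerivAt.matrix_apply {f : ℝ → Matrix (Fin n) (Fin n) ℝ}
    {D : Matrix (Fin n) (Fin n) ℝ} {t : ℝ} (h : HasDerivAt f D t) (k l : Fin n) :
    HasDerivAt (fun s => f s k l) (D k l) t :=
  (LinearMap.toContinuousLinearMap (entryLinearMap ℝ ℝ k l)).hasFDerivAt.comp_hasDerivAt t h

theorem expM_transpose (B : Matrix (Fin n) (Fin n) ℝ) : (expM B)ᵀ = expM Bᵀ :=
  (Matrix.exp_transpose B).symm

theorem continuous_conj_expM_smul (B P : Matrix (Fin n) (Fin n) ℝ) :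
    Continuous fun s : ℝ => (expM (s • B))ᵀ * P * expM (s • B) := by
  unfold expM
  fun_prop

theorem hasDerivAt_conj_expM_smul (B P : Matrix (Fin n) (Fin n) ℝ) (t : ℝ) :
    HasDerivAt (fun s : ℝ => (expM (s • B))ᵀ * P * expM (s • B))
      ((expM (t • B))ᵀ * (Bᵀ * P + P * B) * expM (t • B)) t := by
  rw [show (fun s : ℝ => (expM (s • B))ᵀ * P * expM (s • B)) =
      fun s : ℝ => expM (s • Bᵀ) * P * expM (s • B) by
    simp only [expM_transpose, transpose_smul]]
  have hT : HasDerivAt (fun s : ℝ => expM (s • Bᵀ)) (expM (t • Bᵀ) * Bᵀ) t :=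
    hasDerivAt_exp_smul_const Bᵀ t
  have h : HasDerivAt (fun s : ℝ => expM (s • B)) (B * expM (t • B)) t :=
    hasDerivAt_exp_smul_const' B t
  refine ((hT.mul_const P).mul h).congr_deriv ?_
  rw [expM_transpose, transpose_smul]
  simp only [Matrix.mul_add, Matrix.add_mul, Matrix.mul_assoc]

theorem Mmat_eq_intervalIntegral (A : ℕ → Matrix (Fin n) (Fin n) ℝ) (δ : ℕ → ℝ)
    (Q : Matrix (Fin n) (Fin n) ℝ) (q : ℕ) :
    Mmat A δ Q q = ∫ η in (0 : ℝ)..δ q, (expM (η • A q))ᵀ * Q * expM (η • A q) := by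
  ext k l
  rw [Mmat, of_apply]
  exact (LinearMap.toContinuousLinearMap (entryLinearMap ℝ ℝ k l)).intervalIntegral_comp_comm
    ((continuous_conj_expM_smul (A q) Q).intervalIntegrable (μ := MeasureTheory.volume) 0 (δ q))

theorem hasDerivAt_Mmat_update_self (A : ℕ → Matrix (Fin n) (Fin n) ℝ) (δ : ℕ → ℝ)
    (Q : Matrix (Fin n) (Fin n) ℝ) (i : ℕ) (t : ℝ) :
    HasDerivAt (fun s => Mmat A (Function.update δ i s) Q i)
      ((expM (t • A i))ᵀ * Q * expM (t • A i)) t := by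
  simp only [Mmat_eq_intervalIntegral, Function.update_self]
  exact ((continuous_conj_expM_smul (A i) Q).integral_hasStrictDerivAt 0 t).hasDerivAt

theorem stmt7_general {n N : ℕ} (A : ℕ → Matrix (Fin n) (Fin n) ℝ) (δ : ℕ → ℝ)
    (Q : Matrix (Fin n) (Fin n) ℝ)
    (a i : ℕ) (hai : a ≤ i) (hiN : i ≤ N) :
    ∀ k l : Fin n,
      HasDerivAt (fun s : ℝ => Pmat N A (Function.update δ i s) Q a k l)
        (((Phi A δ (i + 1) a)ᵀ *
            (Q + (A i)ᵀ * Pmat N A δ Q (i + 1) + Pmat N A δ Q (i + 1) * A i) *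
            Phi A δ (i + 1) a) k l) (δ i) := by
  intro k l
  set E : ℝ → Matrix (Fin n) (Fin n) ℝ := fun s => expM (s • A i)
  set X := Phi A δ i a
  set P := Pmat N A δ Q (i + 1)
  simp only [Pmat_update_eq A δ N Q hai hiN]
  have hD : HasDerivAt (fun s => Mmat A (Function.update δ i s) Q i + (E s)ᵀ * P * E s)
      ((E (δ i))ᵀ * (Q + (A i)ᵀ * P + P * A i) * E (δ i)) (δ i) := by
    refine ((hasDerivAt_Mmat_update_self A δ Q i (δ i)).add
      (hasDerivAt_conj_expM_smul (A i) P (δ i))).congr_deriv ?_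
    simp only [E, Matrix.mul_add, Matrix.add_mul, add_assoc]
  have hΦ : Phi A δ (i + 1) a = E (δ i) * X := by
    rw [← Phi_mul A δ hai (Nat.le_succ i), Phi_succ_self]
  refine (((hD.const_mul Xᵀ).mul_const X).const_add _).matrix_apply k l |>.congr_deriv ?_
  simp only [hΦ, transpose_mul, Matrix.mul_assoc]

/-- the partial derivative of `P_a` with respect to `δ_i` exists (entrywise) at
every nonnegative `δ` and equals `Φ(i+1,a)ᵀ (Q + A_iᵀ P_{i+1} + P_{i+1} A_i) Φ(i+1,a)`. -/
theorem stmt7 {n N : ℕ} (A : ℕ → Matrix (Fin n) (Fin n) ℝ) (δ : ℕ → ℝ)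
    (hδ : ∀ q ≤ N, 0 ≤ δ q) (Q : Matrix (Fin n) (Fin n) ℝ)
    (a i : ℕ) (hai : a ≤ i) (hiN : i ≤ N) :
    ∀ k l : Fin n,
      HasDerivAt (fun s : ℝ => Pmat N A (Function.update δ i s) Q a k l)
        (((Phi A δ (i + 1) a)ᵀ *
            (Q + (A i)ᵀ * Pmat N A δ Q (i + 1) + Pmat N A δ Q (i + 1) * A i) *
            Phi A δ (i + 1) a) k l) (δ i) :=
  stmt7_general A δ Q a i hai hiN

end Analysis
end
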